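/- Let f : {0,1}^n → {0,1} be non-constant and computable by a decision tree of depth at most d, d ≥ 1, and let s = psize(f). Define the decision tree T_f recursively: if f is constant, T_f is a leaf labeled with that constant; otherwise, the root of T_f is labeled x_i for the minimum index i minimizing psize(f_{|x_i←0}), its left subtree is T_{f_{|x_i←0}} and its right subtree is T_{f_{|x_i←1}}. Then the zero-depth of T_f — the maximum, over all root-to-leaf paths, of the number of left (x_i = 0) edges taken — is at most d·ln(s) + 1. -/

import Mathlib

/-- Binary decision trees over `n` Boolean variables. -/
inductive DTree (n : ℕ) : Type where
  | leaf : Bool → DTree n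
  | node : Fin n → DTree n → DTree n → DTree n

namespace DTree

/-- Evaluation of a decision tree on an input `x`: at a node labeled `i`,
go right if `x i = true` and left otherwise. -/
def eval {n : ℕ} : DTree n → (Fin n → Bool) → Bool
  | leaf b, _ => b
  | node i t0 t1, x => if x i then eval t1 x else eval t0 x

/-- Depth of a decision tree: maximum number of edges on a root-to-leaf path. -/
def depth {n : ℕ} : DTree n → ℕ
  | leaf _ => 0
  | node _ t0 t1 => 1 + max (depth t0) (depth t1)

end DTree

/-- The set of monomials of the (unique) multilinear `F₂`-polynomial
representation of `f`, via Möbius inversion over `F₂`: the monomial `M`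
occurs iff `∑_{x ≤ 1_M} f(x)` is odd. -/
def monomialsOf {n : ℕ} (f : (Fin n → Bool) → Bool) : Finset (Finset (Fin n)) :=
  Finset.univ.filter (fun M : Finset (Fin n) =>
    (Finset.univ.filter (fun x : Fin n → Bool =>
      (∀ i, x i = true → i ∈ M) ∧ f x = true)).card % 2 = 1)

/-- `psize f` is the number of non-constant monomials of the multilinear
`F₂`-polynomial representation of `f`. -/
def psize {n : ℕ} (f : (Fin n → Bool) → Bool) : ℕ :=
  ((monomialsOf f).filter (fun M => M.Nonempty)).card

/-- Substituting the value `b` for the variable `x_i` in `f`. -/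
def restrict {n : ℕ} (f : (Fin n → Bool) → Bool) (i : Fin n) (b : Bool) :
    (Fin n → Bool) → Bool :=
  fun x => f (Function.update x i b)

/-- `PsizeTree f T` holds when `T` is the tree `T_f` built recursively from
`f`: a leaf labeled with the constant value if `f` is constant, and otherwise
a root labeled with the minimum index `i` minimizing `psize (f|_{x_i ← 0})`,
with left subtree `T_{f|_{x_i ← 0}}` and right subtree `T_{f|_{x_i ← 1}}`. -/
inductive PsizeTree {n : ℕ} : ((Fin n → Bool) → Bool) → DTree n → Prop where
  | leaf (f : (Fin n → Bool) → Bool) (b : Bool) (hconst : ∀ x, f x = b) :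
      PsizeTree f (DTree.leaf b)
  | node (f : (Fin n → Bool) → Bool)
      (hnc : ¬ ∃ b : Bool, ∀ x, f x = b) (i : Fin n)
      (hmin : ∀ j : Fin n, psize (restrict f i false) ≤ psize (restrict f j false))
      (hleast : ∀ j : Fin n, j < i →
        psize (restrict f i false) < psize (restrict f j false))
      (t0 t1 : DTree n)
      (h0 : PsizeTree (restrict f i false) t0)
      (h1 : PsizeTree (restrict f i true) t1) :
      PsizeTree f (DTree.node i t0 t1)

namespace DTree

/-- The zero-depth of a decision tree: the maximum, over all root-to-leaf
paths, of the number of left (`x_i = 0`) edges taken. -/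
def zeroDepth {n : ℕ} : DTree n → ℕ
  | leaf _ => 0
  | node _ t0 t1 => max (zeroDepth t0 + 1) (zeroDepth t1)

end DTree

/-!
Setting `x_i = 0` deletes exactly the monomials containing `x_i`, and setting `x_i = 1` does not
increase `psize` (a monomial `M` of `f|_{x_i←1}` comes from `M` or from `M ∪ {i}` in `f`).
If `f` has a decision tree of depth `d`, the variables queried along its all-zero path meet every
non-constant monomial, so some variable occurs in at least `s / d` of them. Hence the greedy
variable satisfies `psize (f|_{x_i←0}) ≤ (1 - 1/d) s`, and since `log (1 - 1/d) ≤ -1/d`, every left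
edge of `T_f` lowers `d · log psize` by at least `1`, while right edges do not raise it.
Restrictions of `f` are again computed by trees of depth `≤ d`, so induction along `T_f` closes.
-/

open Finset hiding restrict
open Function

section

variable {n : ℕ}

section Monomials

variable {f : (Fin n → Bool) → Bool} {i : Fin n} {M : Finset (Fin n)}

def weightBelow (f : (Fin n → Bool) → Bool) (M : Finset (Fin n)) : ℕ :=
  #{x | (∀ j, x j = true → j ∈ M) ∧ f x = true}

theorem mem_monomialsOf : M ∈ monomialsOf f ↔ weightBelow f M % 2 = 1 := by
  simp [monomialsOf, weightBelow]

theorem restrict_restrict_self (f : (Fin n → Bool) → Bool) (i : Fin n) (b c : Bool) :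
    restrict (restrict f i b) i c = restrict f i b := by
  funext x
  simp [restrict]

theorem card_filter_apply_eq_weightBelow_restrict (f : (Fin n → Bool) → Bool) (hi : i ∉ M)
    (b : Bool) :
    #{x ∈ {x | (∀ j, x j = true → j ∈ insert i M) ∧ f x = true} | x i = b}
      = weightBelow (restrict f i b) M := by
  refine card_nbij' (update · i false) (update · i b) ?_ ?_ ?_ ?_
  · intro x hx
    simp only [mem_coe, mem_filter, mem_univ, true_and, mem_insert] at hx ⊢
    obtain ⟨⟨hM, hf⟩, rfl⟩ := hx
    refine ⟨fun j hj => ?_, by simpa [restrict] using hf⟩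
    rcases eq_or_ne j i with rfl | hji
    · simp at hj
    · exact (hM j (by simpa [hji] using hj)).resolve_left hji
  · intro y hy
    simp only [mem_coe, mem_filter, mem_univ, true_and, mem_insert] at hy ⊢
    refine ⟨⟨fun j hj => ?_, hy.2⟩, by simp⟩
    rcases eq_or_ne j i with rfl | hji
    · exact Or.inl rfl
    · exact Or.inr (hy.1 j (by simpa [hji] using hj))
  · intro x hx
    simp only [mem_coe, mem_filter, mem_univ, true_and] at hx
    simp [← hx.2]
  · intro y hy
    simp only [mem_coe, mem_filter, mem_univ, true_and] at hy
    have hyi : y i = false := by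
      by_contra h
      exact hi (hy.1 i (by simpa using h))
    simp [← hyi]

theorem weightBelow_insert (f : (Fin n → Bool) → Bool) (hi : i ∉ M) :
    weightBelow f (insert i M)
      = weightBelow (restrict f i false) M + weightBelow (restrict f i true) M := by
  rw [weightBelow,
    card_eq_sum_card_fiberwise (f := fun x => x i) (t := univ) fun _ _ => mem_univ _,
    Fintype.sum_bool, add_comm, card_filter_apply_eq_weightBelow_restrict f hi,
    card_filter_apply_eq_weightBelow_restrict f hi]

theorem weightBelow_restrict_false (f : (Fin n → Bool) → Bool) (hi : i ∉ M) :
    weightBelow (restrict f i false) M = weightBelow f M := by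
  unfold weightBelow
  congr 1
  refine filter_congr fun x _ => and_congr_right fun hx => ?_
  have hxi : x i = false := by
    by_contra h
    exact hi (hx i (by simpa using h))
  rw [restrict, ← hxi, update_eq_self]

theorem weightBelow_empty (f : (Fin n → Bool) → Bool) :
    weightBelow f ∅ = (f fun _ => false).toNat := by
  have : ({x | (∀ j, x j = true → j ∈ (∅ : Finset (Fin n))) ∧ f x = true} : Finset _)
      = ({fun _ => false} : Finset _).filter (f · = true) := by
    ext x
    simp [funext_iff]
  rw [weightBelow, this, filter_singleton]
  cases f fun _ => false <;> rfl

theorem notMem_of_mem_monomialsOf_restrict (b : Bool) (hM : M ∈ monomialsOf (restrict f i b)) :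
    i ∉ M := by
  intro hi
  rw [mem_monomialsOf, ← insert_erase hi, weightBelow_insert _ (notMem_erase i M),
    restrict_restrict_self, restrict_restrict_self] at hM
  omega

theorem monomialsOf_restrict_false (f : (Fin n → Bool) → Bool) (i : Fin n) :
    monomialsOf (restrict f i false) = (monomialsOf f).filter (i ∉ ·) := by
  ext M
  rw [mem_filter]
  constructor
  · intro hM
    have hi := notMem_of_mem_monomialsOf_restrict false hM
    rw [mem_monomialsOf, weightBelow_restrict_false f hi] at hM
    exact ⟨mem_monomialsOf.2 hM, hi⟩
  · rintro ⟨hM, hi⟩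
    rwa [mem_monomialsOf, weightBelow_restrict_false f hi, ← mem_monomialsOf]

end Monomials

section Psize

variable {f : (Fin n → Bool) → Bool}

theorem psize_eq_zero_iff : psize f = 0 ↔ ∀ M ∈ monomialsOf f, M = ∅ := by
  simp [psize, filter_eq_empty_iff, not_nonempty_iff_eq_empty]

theorem psize_const (c : Bool) : psize (fun _ : Fin n → Bool => c) = 0 :=
  psize_eq_zero_iff.2 fun M hM => by
    by_contra hne
    obtain ⟨j, hj⟩ := nonempty_of_ne_empty hne
    have hc : restrict (fun _ : Fin n → Bool => c) j false = fun _ => c := rfl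
    exact notMem_of_mem_monomialsOf_restrict false (hc ▸ hM) hj

theorem psize_restrict_true_le (f : (Fin n → Bool) → Bool) (i : Fin n) :
    psize (restrict f i true) ≤ psize f := by
  set φ : Finset (Fin n) → Finset (Fin n) := fun M => if M ∈ monomialsOf f then M else insert i M
  have erase_φ : ∀ M, i ∉ M → (φ M).erase i = M := fun M hi => by
    simp only [φ]
    split_ifs
    exacts [erase_eq_of_notMem hi, erase_insert hi]
  refine card_le_card_of_injOn φ (fun M hM => ?_) (fun M₁ hM₁ M₂ hM₂ h => ?_)
  · simp only [coe_filter, Set.mem_ofPred_eq] at hM ⊢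
    obtain ⟨hM, hne⟩ := hM
    have hi := notMem_of_mem_monomialsOf_restrict true hM
    simp only [φ]
    split_ifs with hf
    · exact ⟨hf, hne⟩
    · refine ⟨?_, hne.mono (subset_insert i M)⟩
      rw [mem_monomialsOf] at hM hf ⊢
      rw [weightBelow_insert f hi, weightBelow_restrict_false f hi]
      omega
  · simp only [coe_filter, Set.mem_ofPred_eq] at hM₁ hM₂
    rw [← erase_φ M₁ (notMem_of_mem_monomialsOf_restrict true hM₁.1),
      ← erase_φ M₂ (notMem_of_mem_monomialsOf_restrict true hM₂.1), h]

theorem apply_update_eq_of_psize_eq_zero (h : psize f = 0) (i : Fin n) :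
    f (update (fun _ => false) i true) = f fun _ => false := by
  have hi : {i} ∉ monomialsOf f := fun hi => singleton_ne_empty i (psize_eq_zero_iff.1 h _ hi)
  rw [mem_monomialsOf, ← insert_empty_eq, weightBelow_insert f (notMem_empty i),
    weightBelow_empty, weightBelow_empty] at hi
  rw [restrict, restrict, update_eq_self_iff.2 rfl] at hi
  revert hi
  cases f (update (fun _ => false) i true) <;> cases f (fun _ => false) <;> simp

theorem eq_const_of_psize_eq_zero (h : psize f = 0) (x : Fin n → Bool) :
    f x = f fun _ => false := by
  suffices ∀ S : Finset (Fin n), ∀ g : (Fin n → Bool) → Bool, psize g = 0 →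
      ∀ x, (∀ j, x j = true → j ∈ S) → g x = g fun _ => false from
    this univ f h x fun j _ => mem_univ j
  intro S
  induction S using Finset.induction_on with
  | empty =>
    intro g _ x hx
    congr
    funext j
    simpa using hx j
  | insert i S hi ih =>
    intro g hg x hx
    have hS : ∀ y : Fin n → Bool, y i = false → (∀ j, y j = true → j ∈ insert i S) →
        ∀ j, y j = true → j ∈ S := fun y hyi hy j hj =>
      (mem_insert.1 (hy j hj)).resolve_left (by rintro rfl; simp_all)
    cases hxi : x i
    · exact ih g hg x (hS x hxi hx)
    · calc g x = restrict g i true (update x i false) := by simp [restrict, ← hxi]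
        _ = restrict g i true fun _ => false :=
          ih _ (Nat.eq_zero_of_le_zero (hg ▸ psize_restrict_true_le g i)) _
            (hS _ (by simp) fun j hj => hx j (by rcases eq_or_ne j i with rfl | hji <;> simp_all))
        _ = g fun _ => false := apply_update_eq_of_psize_eq_zero hg i

theorem psize_pos (hf : ¬ ∃ b : Bool, ∀ x, f x = b) : 0 < psize f :=
  Nat.pos_of_ne_zero fun h => hf ⟨_, eq_const_of_psize_eq_zero h⟩

end Psize

def varCount (f : (Fin n → Bool) → Bool) (i : Fin n) : ℕ :=
  #{M ∈ monomialsOf f | i ∈ M}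

theorem psize_restrict_false_add_varCount (f : (Fin n → Bool) → Bool) (i : Fin n) :
    psize (restrict f i false) + varCount f i = psize f := by
  rw [psize, psize, varCount, monomialsOf_restrict_false, filter_filter,
    ← card_filter_add_card_filter_not (s := (monomialsOf f).filter (·.Nonempty)) (i ∉ ·),
    filter_filter, filter_filter]
  congr 2 <;> refine filter_congr fun M _ => ?_
  · exact and_comm
  · simpa using fun hi : i ∈ M => ⟨i, hi⟩

theorem exists_psize_restrict_false_lt {f : (Fin n → Bool) → Bool} (hf : 0 < psize f) :
    ∃ j, psize (restrict f j false) < psize f := by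
  obtain ⟨M, hM⟩ := card_pos.1 hf
  obtain ⟨hM, j, hj⟩ := mem_filter.1 hM
  have : 0 < varCount f j := card_pos.2 ⟨M, mem_filter.2 ⟨hM, hj⟩⟩
  exact ⟨j, by have := psize_restrict_false_add_varCount f j; omega⟩

namespace DTree

def subst : DTree n → Fin n → Bool → DTree n
  | leaf c, _, _ => leaf c
  | node j t₀ t₁, i, b =>
    if j = i then cond b (t₁.subst i b) (t₀.subst i b)
    else node j (t₀.subst i b) (t₁.subst i b)

theorem eval_subst (T : DTree n) (i : Fin n) (b : Bool) :
    (T.subst i b).eval = restrict T.eval i b := by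
  funext x
  induction T with
  | leaf c => rfl
  | node j t₀ t₁ ih₀ ih₁ =>
    by_cases hji : j = i
    · subst hji
      cases b <;> simp [subst, eval, restrict, ih₀, ih₁]
    · simp [subst, eval, restrict, hji, ih₀, ih₁]

theorem depth_subst_le (T : DTree n) (i : Fin n) (b : Bool) :
    (T.subst i b).depth ≤ T.depth := by
  induction T with
  | leaf c => exact le_rfl
  | node j t₀ t₁ ih₀ ih₁ =>
    simp only [subst, depth]
    split_ifs
    · cases b <;> simp only [cond] <;> omega
    · simp only [depth]
      omega

theorem restrict_eval_node_false (i : Fin n) (t₀ t₁ : DTree n) :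
    restrict (node i t₀ t₁).eval i false = restrict t₀.eval i false := by
  funext x
  simp [restrict, eval]

theorem exists_hittingSet (T : DTree n) :
    ∃ S : Finset (Fin n), #S ≤ T.depth ∧
      ∀ M ∈ monomialsOf T.eval, M.Nonempty → ∃ i ∈ S, i ∈ M := by
  induction T with
  | leaf c =>
    refine ⟨∅, le_rfl, fun M hM hne => ?_⟩
    exact absurd (psize_eq_zero_iff.1 (psize_const c) M hM) hne.ne_empty
  | node i t₀ t₁ ih₀ _ =>
    obtain ⟨S, hS, hhit⟩ := ih₀
    refine ⟨insert i S, by simp only [depth]; have := card_insert_le i S; omega, fun M hM hne => ?_⟩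
    by_cases hi : i ∈ M
    · exact ⟨i, mem_insert_self i S, hi⟩
    · have hM₀ : M ∈ monomialsOf (restrict t₀.eval i false) := by
        rw [← restrict_eval_node_false i t₀ t₁, monomialsOf_restrict_false]
        exact mem_filter.2 ⟨hM, hi⟩
      rw [monomialsOf_restrict_false] at hM₀
      obtain ⟨j, hj, hjM⟩ := hhit M (mem_filter.1 hM₀).1 hne
      exact ⟨j, mem_insert_of_mem hj, hjM⟩

end DTree

theorem exists_psize_le_mul_varCount {T : DTree n} {d : ℕ} (hd : T.depth ≤ d)
    (hf : 0 < psize T.eval) : ∃ j, psize T.eval ≤ d * varCount T.eval j := by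
  obtain ⟨S, hS, hhit⟩ := T.exists_hittingSet
  have hsum : psize T.eval ≤ ∑ j ∈ S, varCount T.eval j := by
    refine (card_le_card fun M hM => ?_).trans card_biUnion_le
    obtain ⟨hM, hne⟩ := mem_filter.1 hM
    obtain ⟨j, hj, hjM⟩ := hhit M hM hne
    exact mem_biUnion.2 ⟨j, hj, mem_filter.2 ⟨hM, hjM⟩⟩
  have hSne : S.Nonempty := by
    obtain ⟨M, hM⟩ := card_pos.1 hf
    obtain ⟨j, hj, -⟩ := hhit M (mem_filter.1 hM).1 (mem_filter.1 hM).2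
    exact ⟨j, hj⟩
  obtain ⟨j, -, hj⟩ := exists_le_of_sum_le hSne (f := fun _ => psize T.eval)
    (g := fun j => d * varCount T.eval j) <| calc
      ∑ _ ∈ S, psize T.eval = #S * psize T.eval := by rw [sum_const, smul_eq_mul]
      _ ≤ d * ∑ j ∈ S, varCount T.eval j := Nat.mul_le_mul (hS.trans hd) hsum
      _ = ∑ j ∈ S, d * varCount T.eval j := mul_sum ..
  exact ⟨j, hj⟩

theorem mul_psize_restrict_add_le {T : DTree n} {d : ℕ} (hd : T.depth ≤ d) {i : Fin n}
    (hmin : ∀ j, psize (restrict T.eval i false) ≤ psize (restrict T.eval j false))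
    (hf : 0 < psize T.eval) :
    d * psize (restrict T.eval i false) + psize T.eval ≤ d * psize T.eval := by
  obtain ⟨j, hj⟩ := exists_psize_le_mul_varCount hd hf
  calc d * psize (restrict T.eval i false) + psize T.eval
      ≤ d * psize (restrict T.eval j false) + d * varCount T.eval j :=
        Nat.add_le_add (Nat.mul_le_mul_left d (hmin j)) hj
    _ = d * psize T.eval := by rw [← mul_add, psize_restrict_false_add_varCount]

theorem mul_log_add_one_le {d s₀ s : ℝ} (hd : 0 ≤ d) (hs₀ : 0 < s₀) (hs : 0 < s)
    (h : d * s₀ + s ≤ d * s) : d * Real.log s₀ + 1 ≤ d * Real.log s := by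
  have hlog : Real.log s₀ - Real.log s ≤ s₀ / s - 1 := by
    rw [← Real.log_div hs₀.ne' hs.ne']
    exact Real.log_le_sub_one_of_pos (div_pos hs₀ hs)
  have hdiv : d * (s₀ / s - 1) ≤ -1 := by
    rw [mul_sub, mul_one, mul_div_assoc', sub_le_iff_le_add, div_le_iff₀ hs]
    linarith
  linarith [mul_le_mul_of_nonneg_left hlog hd]

namespace PsizeTree

variable {f : (Fin n → Bool) → Bool} {Tf : DTree n}

theorem zeroDepth_eq_zero (hPT : PsizeTree f Tf) (hf : psize f = 0) : Tf.zeroDepth = 0 := by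
  cases hPT with
  | leaf => rfl
  | node _ hnc => exact absurd hf (psize_pos hnc).ne'

theorem zeroDepth_le (hPT : PsizeTree f Tf) {d : ℕ} {T : DTree n} (hT : T.eval = f)
    (hd : T.depth ≤ d) : (Tf.zeroDepth : ℝ) ≤ d * Real.log (psize f) + 1 := by
  induction hPT generalizing T with
  | leaf => simp only [DTree.zeroDepth, Nat.cast_zero]; positivity
  | node g hnc i hmin _ t₀ t₁ h₀ h₁ ih₀ ih₁ =>
    subst hT
    have hs := psize_pos hnc
    have hlog : 0 ≤ (d : ℝ) * Real.log (psize T.eval) := by positivity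
    simp only [DTree.zeroDepth, Nat.cast_max, Nat.cast_add, Nat.cast_one, max_le_iff]
    constructor
    · rcases Nat.eq_zero_or_pos (psize (restrict T.eval i false)) with hs₀ | hs₀
      · rw [h₀.zeroDepth_eq_zero hs₀, Nat.cast_zero]
        linarith
      · have hdrop := mul_psize_restrict_add_le hd hmin hs
        have := mul_log_add_one_le (Nat.cast_nonneg d) (Nat.cast_pos.2 hs₀) (Nat.cast_pos.2 hs)
          (by exact_mod_cast hdrop)
        linarith [ih₀ (T.eval_subst i false) ((T.depth_subst_le i false).trans hd)]
    · rcases Nat.eq_zero_or_pos (psize (restrict T.eval i true)) with hs₁ | hs₁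
      · rw [h₁.zeroDepth_eq_zero hs₁, Nat.cast_zero]
        linarith
      · have hmono : Real.log (psize (restrict T.eval i true)) ≤ Real.log (psize T.eval) :=
          Real.log_le_log (Nat.cast_pos.2 hs₁) (by exact_mod_cast psize_restrict_true_le _ i)
        linarith [ih₁ (T.eval_subst i true) ((T.depth_subst_le i true).trans hd),
          mul_le_mul_of_nonneg_left hmono (Nat.cast_nonneg (α := ℝ) d)]

end PsizeTree

theorem restrict_comm (f : (Fin n → Bool) → Bool) {i j : Fin n} (hij : i ≠ j) (b c : Bool) :
    restrict (restrict f i b) j c = restrict (restrict f j c) i b := by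
  funext x
  simp only [restrict, update_comm hij.symm]

def relevantVars (f : (Fin n → Bool) → Bool) : Finset (Fin n) :=
  {i | restrict f i false ≠ f}

theorem relevantVars_restrict_subset (f : (Fin n → Bool) → Bool) (i : Fin n) (b : Bool) :
    relevantVars (restrict f i b) ⊆ (relevantVars f).erase i := by
  intro j hj
  simp only [relevantVars, mem_filter, mem_univ, true_and, mem_erase] at hj ⊢
  have hji : j ≠ i := by
    rintro rfl
    exact hj (restrict_restrict_self f j b false)
  refine ⟨hji, fun h => hj ?_⟩
  rw [restrict_comm f hji.symm, h]

theorem exists_least_argmin {ι α : Type*} [LinearOrder ι] [Fintype ι] [Nonempty ι]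
    [LinearOrder α] (φ : ι → α) : ∃ i, (∀ j, φ i ≤ φ j) ∧ ∀ j < i, φ i < φ j := by
  obtain ⟨i, -, hi⟩ := exists_min_image univ (fun j => toLex (φ j, j)) univ_nonempty
  refine ⟨i, fun j => ?_, fun j hji => ?_⟩
  · rcases Prod.Lex.le_iff.1 (hi j (mem_univ j)) with h | ⟨h, -⟩
    exacts [h.le, h.le]
  · rcases Prod.Lex.le_iff.1 (hi j (mem_univ j)) with h | ⟨-, h⟩
    exacts [h, absurd hji h.not_gt]

theorem exists_psizeTree (f : (Fin n → Bool) → Bool) : ∃ Tf, PsizeTree f Tf := by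
  induction hk : #(relevantVars f) using Nat.strong_induction_on generalizing f with
  | _ k ih =>
  by_cases hc : ∃ b, ∀ x, f x = b
  · obtain ⟨b, hb⟩ := hc
    exact ⟨_, .leaf f b hb⟩
  obtain ⟨j, hj⟩ := exists_psize_restrict_false_lt (psize_pos hc)
  have : Nonempty (Fin n) := ⟨j⟩
  obtain ⟨i, hmin, hleast⟩ := exists_least_argmin fun j => psize (restrict f j false)
  have hi : i ∈ relevantVars f :=
    mem_filter.2 ⟨mem_univ i, fun h => ((hmin j).trans_lt hj).ne (congrArg psize h)⟩
  have hlt : ∀ b, #(relevantVars (restrict f i b)) < k := fun b =>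
    hk ▸ (card_le_card (relevantVars_restrict_subset f i b)).trans_lt (card_erase_lt_of_mem hi)
  obtain ⟨t₀, h₀⟩ := ih _ (hlt false) _ rfl
  obtain ⟨t₁, h₁⟩ := ih _ (hlt true) _ rfl
  exact ⟨_, .node f hc i hmin hleast t₀ t₁ h₀ h₁⟩

end

theorem stmt18_general {n d : ℕ} (f : (Fin n → Bool) → Bool)
    (T : DTree n) (hT : ∀ x, T.eval x = f x) (hdepth : T.depth ≤ d) :
    (∃ Tf : DTree n, PsizeTree f Tf) ∧
    ∀ Tf : DTree n, PsizeTree f Tf →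
      (Tf.zeroDepth : ℝ) ≤ (d : ℝ) * Real.log (psize f) + 1 :=
  ⟨exists_psizeTree f, fun _ hPT => hPT.zeroDepth_le (funext hT) hdepth⟩

/-- For a non-constant `f` computable by a decision tree of depth at most
`d ≥ 1` with `s = psize f`, the recursively built tree `T_f` exists and its
zero-depth is at most `d · ln s + 1`. -/
theorem stmt18 {n d : ℕ} (hd : 1 ≤ d) (f : (Fin n → Bool) → Bool)
    (hnc : ¬ ∃ b : Bool, ∀ x, f x = b)
    (T : DTree n) (hT : ∀ x, T.eval x = f x) (hdepth : T.depth ≤ d) :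
    (∃ Tf : DTree n, PsizeTree f Tf) ∧
    ∀ Tf : DTree n, PsizeTree f Tf →
      (Tf.zeroDepth : ℝ) ≤ (d : ℝ) * Real.log (psize f) + 1 :=
  stmt18_general f T hT hdepth
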